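/- arXiv:1910.05323 — 3 statements merged into one kernel-verified Lean document; each statement's English description precedes it below -/
import Mathlib

section
/- If f and g are functions in L^2(ℝ) whose Fourier transforms are supported in (-∞,0], then the Fourier transform of the product fg (which lies in L^1(ℝ)) is also supported in (-∞,0]. In other words, the class of holomorphic functions (those with Fourier support in the negative half-line) is closed under pointwise multiplication. -/
/-!
On the Fourier side multiplication becomes convolution: for `f, g ∈ L¹ ∩ L²`,
`𝓕 (f g) ξ = ∫ 𝓕 f s · 𝓕 g (ξ - s) ds`. This follows from Plancherel's theorem applied to
`f̄` and the modulation `x ↦ 𝐞(-⟪x, ξ⟫) g x`, once the `L²` Fourier transform is identified with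
the Fourier integral on `L¹ ∩ L²` (both give the same tempered distribution). If `𝓕 f` and
`𝓕 g` vanish on `(0, ∞)` and `ξ > 0`, then for every `s` either `s > 0` or `ξ - s > 0`, so the
integrand vanishes identically.
-/

open MeasureTheory Complex
open scoped FourierTransform ComplexInnerProductSpace ComplexConjugate

variable {V : Type*} [NormedAddCommGroup V] [InnerProductSpace ℝ V] [FiniteDimensional ℝ V]
  [MeasurableSpace V] [BorelSpace V]

section Modulation

variable {E : Type*} [NormedAddCommGroup E] [NormedSpace ℂ E]

theorem Real.fourier_fourierChar_smul (g : V → E) (ξ w : V) :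
    𝓕 (fun x => 𝐞 (-inner ℝ x ξ) • g x) w = 𝓕 g (w + ξ) := by
  simp only [Real.fourier_eq, smul_smul, ← AddChar.map_add_eq_mul, inner_add_right, neg_add]

theorem MeasureTheory.MemLp.fourierChar_smul {p : ENNReal} {g : V → E} (hg : MemLp g p)
    (ξ : V) : MemLp (fun x => 𝐞 (-inner ℝ x ξ) • g x) p :=
  hg.of_le ((Real.continuous_fourierChar.comp (by fun_prop)).aestronglyMeasurable.smul
    hg.aestronglyMeasurable) (ae_of_all _ fun x => by rw [Circle.norm_smul])

end Modulation

theorem Real.fourier_conj (f : V → ℂ) (w : V) :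
    𝓕 (fun x => conj (f x)) w = conj (𝓕 f (-w)) := by
  simp only [Real.fourier_eq, ← integral_conj, inner_neg_right, neg_neg, Circle.smul_def,
    smul_eq_mul, map_mul, ← Circle.coe_inv_eq_conj, ← AddChar.map_neg_eq_inv]

section Plancherel

variable {F : Type*} [NormedAddCommGroup F] [InnerProductSpace ℂ F] [CompleteSpace F]

theorem MeasureTheory.MemLp.fourier_toLp_ae_eq {f : V → F} (hf1 : Integrable f)
    (hf2 : MemLp f 2) : ⇑(𝓕 (hf2.toLp f) : Lp F 2 (volume : Measure V)) =ᵐ[volume] 𝓕 f := by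
  have hcont : Continuous (𝓕 f) :=
    VectorFourier.fourierIntegral_continuous Real.continuous_fourierChar
      (innerSL ℝ).continuous₂ hf1
  refine ae_eq_of_integral_contDiff_smul_eq ((Lp.memLp _).locallyIntegrable (by norm_num))
    hcont.locallyIntegrable fun g hg_smooth hg_supp => ?_
  set φ : SchwartzMap V ℂ := (hg_supp.comp_left ofReal_zero).toSchwartzMap
    (ofRealCLM.contDiff.comp hg_smooth)
  have hφ : ∀ x, φ x = (g x : ℂ) := fun _ => rfl
  have hdistrib : ∫ ξ, 𝓕 (φ : V → ℂ) ξ • f ξ =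
      ∫ x, φ x • (𝓕 (hf2.toLp f) : Lp F 2 (volume : Measure V)) x := by
    have := congrArg (fun T => T φ) (Lp.fourier_toTemperedDistribution_eq (hf2.toLp f))
    simp only [TemperedDistribution.fourier_apply, Lp.toTemperedDistribution_apply] at this
    rw [← this]
    exact integral_congr_ae (hf2.coeFn_toLp.mono fun x hx => by dsimp only; rw [hx]; rfl)
  have hselfAdjoint : ∫ ξ, 𝓕 (φ : V → ℂ) ξ • f ξ = ∫ x, φ x • 𝓕 f x := by
    simpa using! VectorFourier.integral_fourierIntegral_smul_eq_flip (L := innerₗ V)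
      Real.continuous_fourierChar continuous_inner φ.integrable hf1
  simp only [hφ] at hdistrib hselfAdjoint
  simp only [RCLike.real_smul_eq_coe_smul (K := ℂ)]
  exact hdistrib.symm.trans hselfAdjoint

theorem integral_inner_fourier_fourier_of_memLp {f g : V → F} (hf1 : Integrable f)
    (hf2 : MemLp f 2) (hg1 : Integrable g) (hg2 : MemLp g 2) :
    ∫ ξ, ⟪𝓕 f ξ, 𝓕 g ξ⟫ = ∫ x, ⟪f x, g x⟫ := calc
  _ = ⟪(𝓕 (hf2.toLp f) : Lp F 2 (volume : Measure V)), 𝓕 (hg2.toLp g)⟫ := by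
    rw [L2.inner_def]
    refine integral_congr_ae ?_
    filter_upwards [hf2.fourier_toLp_ae_eq hf1, hg2.fourier_toLp_ae_eq hg1] with ξ hfξ hgξ
    rw [hfξ, hgξ]
  _ = ⟪hf2.toLp f, hg2.toLp g⟫ := Lp.inner_fourier_eq _ _
  _ = _ := by
    rw [L2.inner_def]
    refine integral_congr_ae ?_
    filter_upwards [hf2.coeFn_toLp, hg2.coeFn_toLp] with x hfx hgx
    rw [hfx, hgx]

end Plancherel

theorem integral_mul_eq_integral_fourier_mul_fourier_neg {f g : V → ℂ} (hf1 : Integrable f)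
    (hf2 : MemLp f 2) (hg1 : Integrable g) (hg2 : MemLp g 2) :
    ∫ x, f x * g x = ∫ ξ, 𝓕 f ξ * 𝓕 g (-ξ) := by
  have hf1' : Integrable (fun x => conj (f x)) :=
    memLp_one_iff_integrable.1 (memLp_one_iff_integrable.2 hf1).star
  have := integral_inner_fourier_fourier_of_memLp hf1' hf2.star hg1 hg2
  simp only [Real.fourier_conj, RCLike.inner_apply, conj_conj] at this
  rw [← integral_neg_eq_self (fun ξ => 𝓕 f ξ * 𝓕 g (-ξ))]
  simp only [neg_neg, mul_comm (𝓕 f _), mul_comm (f _), this]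

theorem fourier_mul_eq_integral_fourier_mul_fourier_sub {f g : V → ℂ} (hf1 : Integrable f)
    (hf2 : MemLp f 2) (hg1 : Integrable g) (hg2 : MemLp g 2) (ξ : V) :
    𝓕 (fun x => f x * g x) ξ = ∫ s, 𝓕 f s * 𝓕 g (ξ - s) := calc
  _ = ∫ x, f x * (𝐞 (-inner ℝ x ξ) • g x) := by
    simp only [Real.fourier_eq, mul_smul_comm]
  _ = ∫ s, 𝓕 f s * 𝓕 g (-s + ξ) := by
    rw [integral_mul_eq_integral_fourier_mul_fourier_neg hf1 hf2
      (memLp_one_iff_integrable.1 ((memLp_one_iff_integrable.2 hg1).fourierChar_smul ξ))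
      (hg2.fourierChar_smul ξ)]
    simp only [Real.fourier_fourierChar_smul]
  _ = _ := by simp only [neg_add_eq_sub]

/-- If `f` and `g` are functions in `L²(ℝ)` (also integrable, so that
their Fourier transforms are defined pointwise) whose Fourier transforms are supported in
`(-∞, 0]`, then the product `f·g` lies in `L¹(ℝ)` and its Fourier transform is also
supported in `(-∞, 0]`: the class of holomorphic functions is closed under multiplication. -/
theorem holomorphic_closed_under_mul
    (f g : ℝ → ℂ)
    (hf1 : Integrable f) (hf2 : MemLp f 2 (volume : Measure ℝ))
    (hg1 : Integrable g) (hg2 : MemLp g 2 (volume : Measure ℝ))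
    (hfsupp : Function.support (𝓕 f) ⊆ Set.Iic (0 : ℝ))
    (hgsupp : Function.support (𝓕 g) ⊆ Set.Iic (0 : ℝ)) :
    Integrable (fun x => f x * g x) ∧
      Function.support (𝓕 (fun x => f x * g x)) ⊆ Set.Iic (0 : ℝ) := by
  refine ⟨hf2.integrable_mul hg2, Function.support_subset_iff'.2 fun ξ hξ => ?_⟩
  have hξ : 0 < ξ := not_le.1 hξ
  have vanish {h : ℝ → ℂ} (hh : Function.support (𝓕 h) ⊆ Set.Iic 0) {t : ℝ} (ht : 0 < t) :
      𝓕 h t = 0 :=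
    Function.notMem_support.1 fun hmem => (hh hmem).not_gt ht
  rw [fourier_mul_eq_integral_fourier_mul_fourier_sub hf1 hf2 hg1 hg2, ← integral_zero]
  congr 1 with s
  rcases le_or_gt s 0 with hs | hs
  · rw [vanish hgsupp (by linarith), mul_zero]
  · rw [vanish hfsupp hs, zero_mul]
end

section
/- If f and g are in L^2(ℝ) and both have Fourier transforms supported in (-∞,0], then ∫_ℝ f(α) g(α) dα = 0. -/
open MeasureTheory Complex
open scoped FourierTransform

/-! Put `H t = ∫ f x * g (x - t)`, the convolution of `f` with `x ↦ g (-x)`, so that the integral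
in question is `H 0`. Its Fourier transform is `ξ ↦ 𝓕 f ξ * 𝓕 g (-ξ)`, which vanishes for
`ξ ≠ 0` by the support hypotheses, hence almost everywhere. Since `f` and `g` are in `L²`, `H` is
continuous, so Fourier inversion applies at `0` and gives `H 0 = 0`. -/

open Convolution

section ConvolutionL2

variable {G : Type*} [AddCommGroup G] [TopologicalSpace G] [IsTopologicalAddGroup G]
  [MeasurableSpace G] [BorelSpace G]
  {μ : Measure G} [μ.IsAddLeftInvariant] [μ.IsNegInvariant] [μ.InnerRegularCompactLTTop]
  [IsLocallyFiniteMeasure μ]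

theorem MeasureTheory.MemLp.continuous_convolution_mul {f g : G → ℂ} (hf : MemLp f 2 μ)
    (hg : MemLp g 2 μ) : Continuous (f ⋆[ContinuousLinearMap.mul ℂ ℂ, μ] g) := by
  -- `(f ⋆ g) t = ⟪conj f, g (t - ·)⟫` in `L²`, and reflections act continuously on `L²`.
  let reflect : G → C(G, G) := fun t ↦ ⟨fun x ↦ t - x, by fun_prop⟩
  have hreflect : Continuous reflect :=
    ContinuousMap.continuous_of_continuous_uncurry _ (continuous_fst.sub continuous_snd)
  have hmp (t : G) : MeasurePreserving (reflect t) μ μ := μ.measurePreserving_sub_left t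
  let reflected (t : G) : Lp ℂ 2 μ := Lp.compMeasurePreserving (reflect t) (hmp t) (hg.toLp g)
  have hreflected : Continuous reflected :=
    continuous_const.compMeasurePreservingLp hreflect hmp ENNReal.ofNat_ne_top
  have hinner : f ⋆[ContinuousLinearMap.mul ℂ ℂ, μ] g =
      fun t ↦ inner ℂ (hf.star.toLp (star f)) (reflected t) := by
    ext t
    rw [convolution_def, L2.inner_def]
    refine integral_congr_ae ?_
    filter_upwards [hf.star.coeFn_toLp, Lp.coeFn_compMeasurePreserving (hg.toLp g) (hmp t),
      (hmp t).quasiMeasurePreserving.ae_eq_comp hg.coeFn_toLp] with x hfx hgx hgx'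
    rw [hgx, hgx']
    simp [hfx, reflect, mul_comm]
  rw [hinner]
  exact continuous_const.inner hreflected

end ConvolutionL2

section Fourier

variable {V : Type*} [NormedAddCommGroup V] [InnerProductSpace ℝ V] [FiniteDimensional ℝ V]
  [MeasurableSpace V] [BorelSpace V]

theorem MeasureTheory.Integrable.eq_zero_of_fourier_ae_eq_zero {E : Type*} [NormedAddCommGroup E]
    [NormedSpace ℂ E] [CompleteSpace E] {f : V → E} (hf : Integrable f) {v : V}
    (hv : ContinuousAt f v) (h𝓕f : 𝓕 f =ᵐ[volume] 0) : f v = 0 := by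
  rw [← hf.fourierInv_fourier_eq ((integrable_zero _ _ _).congr h𝓕f.symm) hv,
    Real.fourierInv_congr_ae h𝓕f]
  simp [Real.fourierInv_eq]

theorem Real.fourier_mul_convolution_comp_neg {f g : V → ℂ} (hf : Integrable f)
    (hg : Integrable g) (ξ : V) :
    𝓕 (f ⋆[ContinuousLinearMap.mul ℂ ℂ] fun x ↦ g (-x)) ξ = 𝓕 f ξ * 𝓕 g (-ξ) := by
  rw [Real.fourier_mul_convolution_eq hf hg.comp_neg, ← Real.fourierInv_eq_fourier_comp_neg,
    Real.fourierInv_eq_fourier_neg]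

end Fourier

theorem support_mul_comp_neg_subset_zero {α M : Type*} [AddCommGroup α] [LinearOrder α]
    [IsOrderedAddMonoid α] [MulZeroClass M] {u v : α → M} (hu : Function.support u ⊆ Set.Iic 0)
    (hv : Function.support v ⊆ Set.Iic 0) :
    Function.support (fun ξ ↦ u ξ * v (-ξ)) ⊆ {0} := by
  intro ξ hξ
  have hξ_nonpos : ξ ≤ 0 := hu (Function.support_mul_subset_left _ _ hξ)
  have hneg_nonpos : -ξ ≤ 0 := hv (Function.support_mul_subset_right u (fun ξ ↦ v (-ξ)) hξ)
  exact le_antisymm hξ_nonpos (neg_nonpos.mp hneg_nonpos)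

/-- If `f` and `g` are in `L²(ℝ)` (and integrable, so that their Fourier
transforms are defined pointwise) and both have Fourier transforms supported in `(-∞, 0]`,
then `∫ f(α) g(α) dα = 0`. -/
theorem integral_mul_eq_zero_of_holomorphic
    (f g : ℝ → ℂ)
    (hf1 : Integrable f) (hf2 : MemLp f 2 (volume : Measure ℝ))
    (hg1 : Integrable g) (hg2 : MemLp g 2 (volume : Measure ℝ))
    (hfsupp : Function.support (𝓕 f) ⊆ Set.Iic (0 : ℝ))
    (hgsupp : Function.support (𝓕 g) ⊆ Set.Iic (0 : ℝ)) :
    ∫ α : ℝ, f α * g α = 0 := by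
  set H := f ⋆[ContinuousLinearMap.mul ℂ ℂ] fun x ↦ g (-x)
  have hH : H 0 = ∫ α : ℝ, f α * g α := by simp [H, convolution_def]
  have hH_cont : Continuous H :=
    hf2.continuous_convolution_mul (hg2.comp_measurePreserving (Measure.measurePreserving_neg _))
  have h𝓕H : 𝓕 H =ᵐ[volume] 0 := by
    have hsupp : Function.support (𝓕 H) ⊆ {0} := by
      simpa [H, Real.fourier_mul_convolution_comp_neg hf1 hg1] using
        support_mul_comp_neg_subset_zero hfsupp hgsupp
    exact ae_iff.2 (measure_mono_null hsupp (measure_singleton 0))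
  rw [← hH]
  exact (hf1.integrable_convolution _ hg1.comp_neg).eq_zero_of_fourier_ae_eq_zero
    hH_cont.continuousAt h𝓕H
end

section
/- Let R and Y be Schwartz functions on ℝ whose Fourier transforms are supported in (-∞,0), and set b := P[R(1-\bar{Y})] + \bar{P}[\bar{R}(1-Y)], where P projects to frequencies ξ ≤ 0 and \bar{P} = I - P. Then (1-\bar{Y}) R_α + (1-Y)\bar{R}_α - b_α = \bar{P}[\bar{R} Y_α - R_α \bar{Y}] + P[R \bar{Y}_α - \bar{R}_α Y]. -/
open MeasureTheory Complex
open scoped FourierTransform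

/-- The projection `P` onto negative frequencies. -/
noncomputable def Pproj (u : ℝ → ℂ) : ℝ → ℂ := fun x =>
  𝓕⁻ (fun ξ => Set.indicator (Set.Iic (0 : ℝ)) (fun _ => (1 : ℂ)) ξ * 𝓕 u ξ) x

/-- The complementary projection `P̄ = I - P`. -/
noncomputable def Pbarproj (u : ℝ → ℂ) : ℝ → ℂ := fun x => u x - Pproj u x

/-!
Since `𝓕 R` lives on `(-∞, 0)`, `P R = R` and `P R̄ = 0`, so by linearity of `P` the function
`b` simplifies to `R + R̄ (1 - Y) - P[R Ȳ - R̄ Y]`. On Schwartz functions `P` commutes with `∂_α`,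
and the product rule gives `∂_α (R Ȳ - R̄ Y) = (R Ȳ_α - R̄_α Y) - (R̄ Y_α - R_α Ȳ)`. Both sides of
the identity are therefore `R̄ Y_α - R_α Ȳ + P[∂_α (R Ȳ - R̄ Y)]`.
-/

open Set SchwartzMap

namespace Real

variable {V E : Type*} [NormedAddCommGroup V] [InnerProductSpace ℝ V] [MeasurableSpace V]
  [BorelSpace V] [FiniteDimensional ℝ V] [NormedAddCommGroup E] [NormedSpace ℂ E]

theorem fourierInv_sub {f g : V → E} (hf : Integrable f) (hg : Integrable g) :
    𝓕⁻ (f - g) = 𝓕⁻ f - 𝓕⁻ g := by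
  ext w
  simp only [fourierInv_eq_fourier_neg, fourier_eq, Pi.sub_apply, smul_sub]
  exact integral_sub ((fourierIntegral_convergent_iff _).2 hf)
    ((fourierIntegral_convergent_iff _).2 hg)

theorem fourier_conj_s11 (f : V → ℂ) (w : V) :
    𝓕 (fun v => starRingEnd ℂ (f v)) w = starRingEnd ℂ (𝓕 f (-w)) := by
  simp only [fourier_eq, ← integral_conj, inner_neg_right, neg_neg]
  congr 1 with v
  simp [Circle.smul_def, ← Circle.coe_inv_eq_conj, ← AddChar.map_neg_eq_inv]

theorem hasDerivAt_fourierInv {f : ℝ → E} (hf : Integrable f)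
    (hf' : Integrable (fun ξ : ℝ => ξ • f ξ)) (x : ℝ) :
    HasDerivAt (𝓕⁻ f) (𝓕⁻ (fun ξ : ℝ => (2 * π * I * ξ) • f ξ) x) x := by
  have h : HasDerivAt (fun y => 𝓕 f (-y))
      ((-1 : ℝ) • 𝓕 (fun ξ : ℝ => (-2 * π * I * ξ) • f ξ) (-x)) x :=
    (hasDerivAt_fourier hf hf' (-x)).scomp x (hasDerivAt_neg x)
  rw [show 𝓕⁻ f = fun y => 𝓕 f (-y) from funext (fourierInv_eq_fourier_neg f)]
  convert h using 1
  rw [fourierInv_eq_fourier_neg, fourier_eq, fourier_eq, ← integral_smul]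
  congr 1 with ξ
  rw [neg_one_smul, ← smul_neg, ← neg_smul, neg_mul, neg_mul, neg_mul, neg_neg]

end Real

namespace SchwartzMap

variable {E : Type*} [NormedAddCommGroup E] [NormedSpace ℝ E]

noncomputable def conj (f : 𝓢(E, ℂ)) : 𝓢(E, ℂ) :=
  postcompCLM (𝕜 := ℝ) conjCLE.toContinuousLinearMap f

@[simp]
theorem conj_apply (f : 𝓢(E, ℂ)) (x : E) : f.conj x = starRingEnd ℂ (f x) := rfl

noncomputable def mul (f g : 𝓢(E, ℂ)) : 𝓢(E, ℂ) := pairing (ContinuousLinearMap.mul ℂ ℂ) f g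

@[simp]
theorem mul_apply (f g : 𝓢(E, ℂ)) (x : E) : f.mul g x = f x * g x := rfl

theorem derivCLM_conj (f : 𝓢(ℝ, ℂ)) : derivCLM ℝ ℂ f.conj = (derivCLM ℝ ℂ f).conj := by
  ext x
  exact deriv.star

theorem derivCLM_mul (f g : 𝓢(ℝ, ℂ)) :
    derivCLM ℝ ℂ (f.mul g) = (derivCLM ℝ ℂ f).mul g + f.mul (derivCLM ℝ ℂ g) := by
  ext x
  exact deriv_mul f.differentiableAt g.differentiableAt

end SchwartzMap

theorem Pproj_eq_fourierInv_indicator (u : ℝ → ℂ) :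
    Pproj u = 𝓕⁻ ((Iic 0).indicator (𝓕 u)) := by
  refine funext fun x => congrArg (fun g : ℝ → ℂ => 𝓕⁻ g x) (funext fun ξ => ?_)
  by_cases hξ : ξ ∈ Iic (0 : ℝ) <;> simp [hξ]

theorem Pproj_sub (u v : 𝓢(ℝ, ℂ)) : Pproj ⇑(u - v) = Pproj u - Pproj v := by
  have h𝓕 : 𝓕 ⇑(u - v) = ⇑(𝓕 u : 𝓢(ℝ, ℂ)) - ⇑(𝓕 v : 𝓢(ℝ, ℂ)) :=
    congrArg (fun f : 𝓢(ℝ, ℂ) => ⇑f) (map_sub (FourierTransform.fourierCLM ℂ 𝓢(ℝ, ℂ)) u v)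
  rw [Pproj_eq_fourierInv_indicator, Pproj_eq_fourierInv_indicator,
    Pproj_eq_fourierInv_indicator, h𝓕, indicator_sub']
  exact Real.fourierInv_sub ((𝓕 u).integrable.indicator measurableSet_Iic)
    ((𝓕 v).integrable.indicator measurableSet_Iic)

theorem Pbarproj_add_Pproj (u v : 𝓢(ℝ, ℂ)) (x : ℝ) :
    Pbarproj u x + Pproj v x = u x + Pproj ⇑(v - u) x := by
  rw [Pproj_sub, Pbarproj, Pi.sub_apply]
  ring

theorem hasDerivAt_Pproj (u : 𝓢(ℝ, ℂ)) (x : ℝ) :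
    HasDerivAt (Pproj u) (Pproj ⇑(derivCLM ℝ ℂ u) x) x := by
  have h𝓕 : 𝓕 ⇑(derivCLM ℝ ℂ u) = fun ξ : ℝ => (2 * Real.pi * I * ξ) • 𝓕 u ξ :=
    Real.fourier_deriv u.integrable u.differentiable (derivCLM ℝ ℂ u).integrable
  have hmoment : Integrable (fun ξ : ℝ => ξ • 𝓕 u ξ) :=
    ((𝓕 u).integrable_pow_mul volume 1).mono' (by fun_prop) (ae_of_all _ fun ξ => by simp)
  rw [Pproj_eq_fourierInv_indicator, Pproj_eq_fourierInv_indicator, h𝓕, indicator_smul]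
  refine Real.hasDerivAt_fourierInv ((𝓕 u).integrable.indicator measurableSet_Iic) ?_ x
  have h := hmoment.indicator (measurableSet_Iic (a := 0))
  rw [indicator_smul] at h
  exact h

theorem Pproj_eq_self_of_support_fourier_subset {u : ℝ → ℂ} (hc : Continuous u)
    (hu : Integrable u) (hFu : Integrable (𝓕 u)) (h : Function.support (𝓕 u) ⊆ Iic 0) :
    Pproj u = u := by
  rw [Pproj_eq_fourierInv_indicator, indicator_eq_self.2 h, hc.fourierInv_fourier_eq hu hFu]

theorem Pproj_conj_eq_zero_of_support_fourier_subset {u : ℝ → ℂ}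
    (h : Function.support (𝓕 u) ⊆ Iio 0) : Pproj (fun x => starRingEnd ℂ (u x)) = 0 := by
  have hvanish : (Iic 0).indicator (𝓕 fun x => starRingEnd ℂ (u x)) = 0 := by
    ext ξ
    refine indicator_apply_eq_zero.2 fun hξ => ?_
    rw [Real.fourier_conj_s11, map_eq_zero]
    exact Function.notMem_support.1 fun hmem => (h hmem).not_ge (neg_nonneg.2 (mem_Iic.1 hξ))
  rw [Pproj_eq_fourierInv_indicator, hvanish]
  ext x
  simp [Real.fourierInv_eq]

theorem Pproj_add_Pbarproj_eq {R : 𝓢(ℝ, ℂ)} (Y : 𝓢(ℝ, ℂ))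
    (hR : Function.support (𝓕 ⇑R) ⊆ Iio 0) :
    (fun x => Pproj (fun y => R y * (1 - starRingEnd ℂ (Y y))) x +
        Pbarproj (fun y => starRingEnd ℂ (R y) * (1 - Y y)) x) =
      ⇑(R + (R.conj - R.conj.mul Y)) - Pproj ⇑(R.mul Y.conj - R.conj.mul Y) := by
  have hPR : Pproj ⇑R = ⇑R := Pproj_eq_self_of_support_fourier_subset R.continuous
    R.integrable (𝓕 R).integrable (hR.trans Iio_subset_Iic_self)
  have hPRc : Pproj ⇑R.conj = 0 := Pproj_conj_eq_zero_of_support_fourier_subset hR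
  have hf : (fun y => R y * (1 - starRingEnd ℂ (Y y))) = ⇑(R - R.mul Y.conj) := by
    ext y
    simp [mul_sub]
  have hg : (fun y => starRingEnd ℂ (R y) * (1 - Y y)) = ⇑(R.conj - R.conj.mul Y) := by
    ext y
    simp [mul_sub]
  ext x
  simp only [hf, hg, Pbarproj, Pproj_sub, hPR, hPRc, Pi.sub_apply, Pi.zero_apply, add_apply,
    sub_apply, mul_apply, conj_apply]
  ring

theorem M_projected_identity_general
    (R Y : SchwartzMap ℝ ℂ)
    (hRsupp : Function.support (𝓕 (⇑R)) ⊆ Set.Iio (0 : ℝ)) :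
    ∀ α : ℝ,
      (1 - (starRingEnd ℂ) (Y α)) * deriv (⇑R) α +
        (1 - Y α) * (starRingEnd ℂ) (deriv (⇑R) α) -
        deriv (fun x =>
          Pproj (fun y => R y * (1 - (starRingEnd ℂ) (Y y))) x +
            Pbarproj (fun y => (starRingEnd ℂ) (R y) * (1 - Y y)) x) α
      = Pbarproj (fun x => (starRingEnd ℂ) (R x) * deriv (⇑Y) x -
            deriv (⇑R) x * (starRingEnd ℂ) (Y x)) α +
          Pproj (fun x => R x * (starRingEnd ℂ) (deriv (⇑Y) x) -
            (starRingEnd ℂ) (deriv (⇑R) x) * Y x) α := by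
  intro α
  set R' := derivCLM ℝ ℂ R
  set Y' := derivCLM ℝ ℂ Y
  have hA : (fun x => starRingEnd ℂ (R x) * deriv Y x - deriv R x * starRingEnd ℂ (Y x)) =
      ⇑(R.conj.mul Y' - R'.mul Y.conj) := by
    ext x
    simp [R', Y']
  have hB : (fun x => R x * starRingEnd ℂ (deriv Y x) - starRingEnd ℂ (deriv R x) * Y x) =
      ⇑(R.mul Y'.conj - R'.conj.mul Y) := by
    ext x
    simp [R', Y']
  have hQ : derivCLM ℝ ℂ (R.mul Y.conj - R.conj.mul Y) =
      (R.mul Y'.conj - R'.conj.mul Y) - (R.conj.mul Y' - R'.mul Y.conj) := by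
    simp only [R', Y', map_sub, derivCLM_mul, derivCLM_conj]
    abel
  rw [Pproj_add_Pbarproj_eq Y hRsupp, hA, hB, Pbarproj_add_Pproj, ← hQ,
    (((R + (R.conj - R.conj.mul Y)).hasDerivAt α).sub (hasDerivAt_Pproj _ α)).deriv,
    ← derivCLM_apply ℝ (R + (R.conj - R.conj.mul Y))]
  simp only [R', Y', map_add, map_sub, derivCLM_conj, derivCLM_mul, derivCLM_apply, add_apply,
    sub_apply, mul_apply, conj_apply, FunLike.coe_sub, FunLike.coe_add]
  ring

/-- Let `R` and `Y` be Schwartz functions on `ℝ` with Fourier transforms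
supported in `(-∞,0)`, and set `b := P[R(1-Ȳ)] + P̄[R̄(1-Y)]`. Then
`(1-Ȳ) R_α + (1-Y) R̄_α - b_α = P̄[R̄ Y_α - R_α Ȳ] + P[R Ȳ_α - R̄_α Y]`:
the projected form of the auxiliary function `M`. -/
theorem M_projected_identity
    (R Y : SchwartzMap ℝ ℂ)
    (hRsupp : Function.support (𝓕 (⇑R)) ⊆ Set.Iio (0 : ℝ))
    (hYsupp : Function.support (𝓕 (⇑Y)) ⊆ Set.Iio (0 : ℝ)) :
    ∀ α : ℝ,
      (1 - (starRingEnd ℂ) (Y α)) * deriv (⇑R) α +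
        (1 - Y α) * (starRingEnd ℂ) (deriv (⇑R) α) -
        deriv (fun x =>
          Pproj (fun y => R y * (1 - (starRingEnd ℂ) (Y y))) x +
            Pbarproj (fun y => (starRingEnd ℂ) (R y) * (1 - Y y)) x) α
      = Pbarproj (fun x => (starRingEnd ℂ) (R x) * deriv (⇑Y) x -
            deriv (⇑R) x * (starRingEnd ℂ) (Y x)) α +
          Pproj (fun x => R x * (starRingEnd ℂ) (deriv (⇑Y) x) -
            (starRingEnd ℂ) (deriv (⇑R) x) * Y x) α :=
  M_projected_identity_general R Y hRsupp
end
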